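/- arXiv:2002.12568 — 4 statements merged into one kernel-verified Lean document; each statement's English description precedes it below -/
import Mathlib

section
/- In a weak bialgebra H, every element of the target subalgebra H_t = ε_t(H) commutes with every element of the source subalgebra H_s = ε_s(H): zy = yz for all z ∈ H_t and y ∈ H_s. -/
open TensorProduct

noncomputable section

/-- A weak bialgebra over a field `k`: an algebra and a coalgebra structure on `H`
satisfying the weak compatibility axioms (WH1)–(WH3) of Böhm–Nill–Szlachányi. -/
class WeakBialgebra (k H : Type*) [Field k] [Ring H] [Algebra k H] [Coalgebra k H] : Prop where
  /-- (WH1) `Δ(xy) = Δ(x)Δ(y)`. -/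
  comul_mul : ∀ x y : H,
    Coalgebra.comul (R := k) (x * y) = Coalgebra.comul (R := k) x * Coalgebra.comul (R := k) y
  /-- (WH2) `Δ²(1) = (Δ(1)⊗1)(1⊗Δ(1))`. -/
  comul_one_left :
    LinearMap.rTensor H (Coalgebra.comul (R := k)) (Coalgebra.comul (R := k) (1 : H)) =
      (Coalgebra.comul (R := k) (1 : H) ⊗ₜ[k] (1 : H)) *
        (TensorProduct.assoc k H H H).symm ((1 : H) ⊗ₜ[k] Coalgebra.comul (R := k) (1 : H))
  /-- (WH2) `Δ²(1) = (1⊗Δ(1))(Δ(1)⊗1)`. -/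
  comul_one_right :
    LinearMap.rTensor H (Coalgebra.comul (R := k)) (Coalgebra.comul (R := k) (1 : H)) =
      (TensorProduct.assoc k H H H).symm ((1 : H) ⊗ₜ[k] Coalgebra.comul (R := k) (1 : H)) *
        (Coalgebra.comul (R := k) (1 : H) ⊗ₜ[k] (1 : H))
  /-- (WH3)(i) `ε(xyz) = Σ ε(x y₍₁₎) ε(y₍₂₎ z)`. -/
  counit_mul_mul : ∀ x y z : H,
    Coalgebra.counit (R := k) (x * y * z) =
      LinearMap.mul' k k (TensorProduct.map
        (Coalgebra.counit ∘ₗ LinearMap.mulLeft k x)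
        (Coalgebra.counit ∘ₗ LinearMap.mulRight k z) (Coalgebra.comul (R := k) y))
  /-- (WH3)(ii) `ε(xyz) = Σ ε(x y₍₂₎) ε(y₍₁₎ z)`. -/
  counit_mul_mul' : ∀ x y z : H,
    Coalgebra.counit (R := k) (x * y * z) =
      LinearMap.mul' k k (TensorProduct.map
        (Coalgebra.counit ∘ₗ LinearMap.mulRight k z)
        (Coalgebra.counit ∘ₗ LinearMap.mulLeft k x) (Coalgebra.comul (R := k) y))

variable (k H : Type*) [Field k] [Ring H] [Algebra k H] [Coalgebra k H]

/-- The target counital map `ε_t(x) = Σ ε(1₍₁₎ x) 1₍₂₎`. -/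
def epsT : H →ₗ[k] H :=
  (TensorProduct.lid k H).toLinearMap
    ∘ₗ LinearMap.rTensor H (Coalgebra.counit ∘ₗ LinearMap.mul' k H)
    ∘ₗ (TensorProduct.assoc k H H H).symm.toLinearMap
    ∘ₗ LinearMap.lTensor H (TensorProduct.comm k H H).toLinearMap
    ∘ₗ (TensorProduct.assoc k H H H).toLinearMap
    ∘ₗ TensorProduct.mk k (H ⊗[k] H) H (Coalgebra.comul (R := k) (1 : H))

/-- The source counital map `ε_s(x) = Σ 1₍₁₎ ε(x 1₍₂₎)`. -/
def epsS : H →ₗ[k] H :=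
  (TensorProduct.lid k H).toLinearMap
    ∘ₗ LinearMap.rTensor H (Coalgebra.counit ∘ₗ LinearMap.mul' k H)
    ∘ₗ (TensorProduct.assoc k H H H).symm.toLinearMap
    ∘ₗ LinearMap.lTensor H (TensorProduct.comm k H H).toLinearMap
    ∘ₗ (TensorProduct.mk k H (H ⊗[k] H)).flip (Coalgebra.comul (R := k) (1 : H))


/-- `a ⊗ b ↦ ε(a*w) • b`. -/
def myET (w : H) : H ⊗[k] H →ₗ[k] H :=
  (TensorProduct.lid k H).toLinearMap
    ∘ₗ LinearMap.rTensor H (Coalgebra.counit ∘ₗ LinearMap.mulRight k w)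

/-- `a ⊗ b ↦ ε(v*b) • a`. -/
def myES (v : H) : H ⊗[k] H →ₗ[k] H :=
  (TensorProduct.rid k H).toLinearMap
    ∘ₗ LinearMap.lTensor H (Coalgebra.counit ∘ₗ LinearMap.mulLeft k v)

/-- `(a ⊗ m) ⊗ t ↦ ε(a*w) ε(v*t) • m`. -/
def myPhi (w v : H) : (H ⊗[k] H) ⊗[k] H →ₗ[k] H :=
  myET k H w
    ∘ₗ (TensorProduct.rid k (H ⊗[k] H)).toLinearMap
    ∘ₗ LinearMap.lTensor (H ⊗[k] H) (Coalgebra.counit ∘ₗ LinearMap.mulLeft k v)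

lemma myET_tmul (w a b : H) :
    myET k H w (a ⊗ₜ[k] b) = Coalgebra.counit (R := k) (a * w) • b := by
  simp [myET]

lemma myES_tmul (v a b : H) :
    myES k H v (a ⊗ₜ[k] b) = Coalgebra.counit (R := k) (v * b) • a := by
  simp [myES]

lemma myPhi_tmul (w v a m t : H) :
    myPhi k H w v ((a ⊗ₜ[k] m) ⊗ₜ[k] t) =
      Coalgebra.counit (R := k) (v * t) • (Coalgebra.counit (R := k) (a * w) • m) := by
  simp [myPhi, myET_tmul]

lemma myKey1 (w v : H) (c d : H ⊗[k] H) :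
    myPhi k H w v ((c ⊗ₜ[k] (1 : H)) *
        (TensorProduct.assoc k H H H).symm ((1 : H) ⊗ₜ[k] d)) =
      myET k H w c * myES k H v d := by
  induction c using TensorProduct.induction_on with
  | zero => simp
  | add x y hx hy => simp only [add_tmul, add_mul, map_add, hx, hy]
  | tmul a b =>
    induction d using TensorProduct.induction_on with
    | zero => simp only [tmul_zero, LinearEquiv.map_zero, LinearMap.map_zero, mul_zero, zero_mul]
    | add x y hx hy => simp only [tmul_add, map_add, mul_add, hx, hy]
    | tmul a' b' =>
      simp [myPhi_tmul, myET_tmul, myES_tmul, Algebra.TensorProduct.tmul_mul_tmul,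
        smul_smul, smul_mul_smul_comm, mul_comm]

lemma myKey2 (w v : H) (c d : H ⊗[k] H) :
    myPhi k H w v ((TensorProduct.assoc k H H H).symm ((1 : H) ⊗ₜ[k] d) *
        (c ⊗ₜ[k] (1 : H))) =
      myES k H v d * myET k H w c := by
  induction c using TensorProduct.induction_on with
  | zero => simp
  | add x y hx hy => simp only [add_tmul, mul_add, map_add, hx, hy]
  | tmul a b =>
    induction d using TensorProduct.induction_on with
    | zero => simp only [tmul_zero, LinearEquiv.map_zero, LinearMap.map_zero, mul_zero, zero_mul]
    | add x y hx hy => simp only [tmul_add, map_add, add_mul, hx, hy]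
    | tmul a' b' =>
      simp [myPhi_tmul, myET_tmul, myES_tmul, Algebra.TensorProduct.tmul_mul_tmul,
        smul_smul, smul_mul_smul_comm, mul_comm]


lemma epsT_eq_myET (w : H) :
    epsT k H w = myET k H w (Coalgebra.comul (R := k) (1 : H)) := by
  rw [epsT]
  simp only [LinearMap.coe_comp, Function.comp_apply, LinearEquiv.coe_coe,
    TensorProduct.mk_apply]
  generalize Coalgebra.comul (R := k) (1 : H) = c
  induction c using TensorProduct.induction_on with
  | zero => simp only [zero_tmul, LinearEquiv.map_zero, LinearMap.map_zero]
  | add x y hx hy => simp only [add_tmul, LinearEquiv.map_add, LinearMap.map_add, hx, hy]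
  | tmul a b =>
    simp [myET_tmul, LinearMap.mul'_apply]

lemma epsS_eq_myES (v : H) :
    epsS k H v = myES k H v (Coalgebra.comul (R := k) (1 : H)) := by
  rw [epsS]
  simp only [LinearMap.coe_comp, Function.comp_apply, LinearEquiv.coe_coe,
    LinearMap.flip_apply, TensorProduct.mk_apply]
  generalize Coalgebra.comul (R := k) (1 : H) = c
  induction c using TensorProduct.induction_on with
  | zero => simp only [tmul_zero, LinearEquiv.map_zero, LinearMap.map_zero]
  | add x y hx hy => simp only [tmul_add, LinearEquiv.map_add, LinearMap.map_add, hx, hy]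
  | tmul a b =>
    simp [myES_tmul, LinearMap.mul'_apply]

/-- Every element of `H_t = ε_t(H)` commutes with every element of `H_s = ε_s(H)`. -/
theorem range_epsT_commute_range_epsS [WeakBialgebra k H] :
    ∀ z ∈ LinearMap.range (epsT k H), ∀ y ∈ LinearMap.range (epsS k H), z * y = y * z := by
  rintro z ⟨w, rfl⟩ y ⟨v, rfl⟩
  have h2 := (WeakBialgebra.comul_one_left (k := k) (H := H)).symm.trans
    (WeakBialgebra.comul_one_right (k := k) (H := H))
  have h3 := congrArg (myPhi k H w v) h2
  rw [myKey1, myKey2] at h3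
  rw [epsT_eq_myET, epsS_eq_myES]
  exact h3
end
end

section
/- Let H be a weak bialgebra with H_t = ε_t(H) and H_s = ε_s(H). Then H_t is a unital subalgebra of H that is a left coideal (i.e. Δ(H_t) ⊆ H ⊗ H_t), H_s is a unital subalgebra of H that is a right coideal (i.e. Δ(H_s) ⊆ H_s ⊗ H), and Δ(1) ∈ H_s ⊗ H_t. -/
open TensorProduct

set_option maxHeartbeats 1000000
set_option synthInstance.maxHeartbeats 200000

set_option linter.unusedSectionVars false
noncomputable section

variable (k H : Type*) [Field k] [Ring H] [Algebra k H] [Coalgebra k H]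

namespace WBAux

/-- Tail of `epsT`: `Tt ((a ⊗ b) ⊗ x) = ε(a x) • b`. -/
def Tt : (H ⊗[k] H) ⊗[k] H →ₗ[k] H :=
  (TensorProduct.lid k H).toLinearMap
    ∘ₗ LinearMap.rTensor H (Coalgebra.counit ∘ₗ LinearMap.mul' k H)
    ∘ₗ (TensorProduct.assoc k H H H).symm.toLinearMap
    ∘ₗ LinearMap.lTensor H (TensorProduct.comm k H H).toLinearMap
    ∘ₗ (TensorProduct.assoc k H H H).toLinearMap

/-- Tail of `epsS`: `Ts (x ⊗ (a ⊗ b)) = ε(x b) • a`. -/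
def Ts : H ⊗[k] (H ⊗[k] H) →ₗ[k] H :=
  (TensorProduct.lid k H).toLinearMap
    ∘ₗ LinearMap.rTensor H (Coalgebra.counit ∘ₗ LinearMap.mul' k H)
    ∘ₗ (TensorProduct.assoc k H H H).symm.toLinearMap
    ∘ₗ LinearMap.lTensor H (TensorProduct.comm k H H).toLinearMap

/-- `(id ⊗ ε ⊗ id)` on `(H ⊗ H) ⊗ H`. -/
def Phi : (H ⊗[k] H) ⊗[k] H →ₗ[k] H ⊗[k] H :=
  LinearMap.rTensor H
    ((TensorProduct.rid k H).toLinearMap ∘ₗ LinearMap.lTensor H (Coalgebra.counit (R := k)))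

variable {k H}

/-- `Th x (a ⊗ u) = ε(a x) • u`. -/
def Th (x : H) : H ⊗[k] (H ⊗[k] H) →ₗ[k] H ⊗[k] H :=
  (TensorProduct.lid k (H ⊗[k] H)).toLinearMap
    ∘ₗ LinearMap.rTensor (H ⊗[k] H) (Coalgebra.counit ∘ₗ LinearMap.mulRight k x)

/-- `Th' x (u ⊗ c) = ε(x c) • u`. -/
def Th' (x : H) : (H ⊗[k] H) ⊗[k] H →ₗ[k] H ⊗[k] H :=
  (TensorProduct.rid k (H ⊗[k] H)).toLinearMap
    ∘ₗ LinearMap.lTensor (H ⊗[k] H) (Coalgebra.counit ∘ₗ LinearMap.mulLeft k x)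

@[simp] lemma Tt_tmul (a b x : H) :
    Tt k H ((a ⊗ₜ[k] b) ⊗ₜ[k] x) = Coalgebra.counit (R := k) (a * x) • b := by
  simp [Tt, LinearMap.mul'_apply]

@[simp] lemma Ts_tmul (a b x : H) :
    Ts k H (x ⊗ₜ[k] (a ⊗ₜ[k] b)) = Coalgebra.counit (R := k) (x * b) • a := by
  simp [Ts, LinearMap.mul'_apply]

@[simp] lemma Phi_tmul (a b c : H) :
    Phi k H ((a ⊗ₜ[k] b) ⊗ₜ[k] c) = Coalgebra.counit (R := k) b • (a ⊗ₜ[k] c) := by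
  simp [Phi, smul_tmul']

@[simp] lemma Th_tmul (x a : H) (u : H ⊗[k] H) :
    Th x (a ⊗ₜ[k] u) = Coalgebra.counit (R := k) (a * x) • u := by
  simp [Th]

@[simp] lemma Th'_tmul (x c : H) (u : H ⊗[k] H) :
    Th' x (u ⊗ₜ[k] c) = Coalgebra.counit (R := k) (x * c) • u := by
  simp [Th']

lemma epsT_eq : epsT k H =
    Tt k H ∘ₗ TensorProduct.mk k (H ⊗[k] H) H (Coalgebra.comul (R := k) (1 : H)) := rfl

lemma epsS_eq : epsS k H =
    Ts k H ∘ₗ (TensorProduct.mk k H (H ⊗[k] H)).flip (Coalgebra.comul (R := k) (1 : H)) := rfl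

lemma epsT_apply (x : H) :
    epsT k H x = Tt k H ((Coalgebra.comul (R := k) (1 : H)) ⊗ₜ[k] x) := rfl

lemma epsS_apply (x : H) :
    epsS k H x = Ts k H (x ⊗ₜ[k] (Coalgebra.comul (R := k) (1 : H))) := rfl

/-- counit cancellation for `Phi`. -/
lemma Phi_rTensor_comul (u : H ⊗[k] H) :
    Phi k H (LinearMap.rTensor H (Coalgebra.comul (R := k)) u) = u := by
  induction u using TensorProduct.induction_on with
  | zero => simp
  | tmul a b =>
      simp only [LinearMap.rTensor_tmul, Phi, LinearMap.coe_comp, LinearEquiv.coe_coe,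
        Function.comp_apply]
      rw [show (LinearMap.lTensor H (Coalgebra.counit (R := k))) = (Coalgebra.counit (R := k)).lTensor H from rfl]
      rw [Coalgebra.lTensor_counit_comul (R := k) a]
      simp
  | add u v hu hv => simp [map_add, hu, hv]

/-- The fundamental bilinear identity, first grouping. -/
lemma key1 (s t : H ⊗[k] H) :
    Phi k H (((TensorProduct.assoc k H H H).symm ((1 : H) ⊗ₜ[k] s)) * (t ⊗ₜ[k] (1 : H))) =
      LinearMap.lTensor H (Tt k H ∘ₗ TensorProduct.mk k (H ⊗[k] H) H s) t := by
  induction s using TensorProduct.induction_on with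
  | zero => simp [tmul_zero, LinearMap.comp_zero, LinearMap.lTensor_zero]
  | tmul c d =>
      induction t using TensorProduct.induction_on with
      | zero => simp
      | tmul a b =>
          simp [TensorProduct.assoc_symm_tmul, Algebra.TensorProduct.tmul_mul_tmul,
            smul_tmul', tmul_smul]
      | add t₁ t₂ h₁ h₂ =>
          simp only [add_tmul, mul_add, map_add, h₁, h₂]
  | add s₁ s₂ h₁ h₂ =>
      simp only [tmul_add, map_add, add_mul, h₁, h₂]
      rw [LinearMap.comp_add, LinearMap.lTensor_add, LinearMap.add_apply]

/-- The fundamental bilinear identity, second grouping. -/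
lemma key2 (s t : H ⊗[k] H) :
    Phi k H (((TensorProduct.assoc k H H H).symm ((1 : H) ⊗ₜ[k] s)) * (t ⊗ₜ[k] (1 : H))) =
      LinearMap.rTensor H (Ts k H ∘ₗ (TensorProduct.mk k H (H ⊗[k] H)).flip t) s := by
  induction s using TensorProduct.induction_on with
  | zero => simp [tmul_zero]
  | tmul c d =>
      induction t using TensorProduct.induction_on with
      | zero => simp [LinearMap.comp_zero, LinearMap.rTensor_zero,
          show (TensorProduct.mk k H (H ⊗[k] H)).flip (0 : H ⊗[k] H) = 0 from map_zero _]
      | tmul a b =>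
          simp [TensorProduct.assoc_symm_tmul, Algebra.TensorProduct.tmul_mul_tmul,
            smul_tmul', tmul_smul]
      | add t₁ t₂ h₁ h₂ =>
          simp only [add_tmul, mul_add, map_add, h₁, h₂]
          rw [LinearMap.comp_add, LinearMap.rTensor_add, LinearMap.add_apply]
  | add s₁ s₂ h₁ h₂ =>
      simp only [tmul_add, map_add, add_mul, h₁, h₂]

lemma J1 (x : H) (s : H ⊗[k] H) :
    Th x (LinearMap.lTensor H (Coalgebra.comul (R := k)) s) =
      Coalgebra.comul (R := k) (Tt k H (s ⊗ₜ[k] x)) := by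
  induction s using TensorProduct.induction_on with
  | zero => simp
  | tmul a b => simp [map_smul]
  | add u v hu hv => simp only [map_add, add_tmul, hu, hv]

lemma J2 (x : H) (s : H ⊗[k] H) :
    Th' x (LinearMap.rTensor H (Coalgebra.comul (R := k)) s) =
      Coalgebra.comul (R := k) (Ts k H (x ⊗ₜ[k] s)) := by
  induction s using TensorProduct.induction_on with
  | zero => simp
  | tmul a b => simp [map_smul]
  | add u v hu hv => simp only [map_add, tmul_add, hu, hv]

lemma J4 (x : H) (s t : H ⊗[k] H) :
    Th x ((TensorProduct.assoc k H H H)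
        (((TensorProduct.assoc k H H H).symm ((1 : H) ⊗ₜ[k] s)) * (t ⊗ₜ[k] (1 : H)))) =
      s * (Tt k H (t ⊗ₜ[k] x) ⊗ₜ[k] (1 : H)) := by
  induction s using TensorProduct.induction_on with
  | zero => simp [tmul_zero]
  | tmul c d =>
      induction t using TensorProduct.induction_on with
      | zero => simp [tmul_zero]
      | tmul a b =>
          simp [TensorProduct.assoc_symm_tmul, Algebra.TensorProduct.tmul_mul_tmul,
            smul_tmul', tmul_smul, mul_smul_comm, smul_mul_assoc]
      | add t₁ t₂ h₁ h₂ =>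
          simp only [add_tmul, mul_add, map_add, h₁, h₂]
  | add s₁ s₂ h₁ h₂ =>
      simp only [tmul_add, map_add, add_mul, h₁, h₂]

lemma J5 (x : H) (s t : H ⊗[k] H) :
    Th x ((TensorProduct.assoc k H H H)
        ((s ⊗ₜ[k] (1 : H)) * ((TensorProduct.assoc k H H H).symm ((1 : H) ⊗ₜ[k] t)))) =
      (Tt k H (s ⊗ₜ[k] x) ⊗ₜ[k] (1 : H)) * t := by
  induction s using TensorProduct.induction_on with
  | zero => simp [zero_tmul]
  | tmul a b =>
      induction t using TensorProduct.induction_on with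
      | zero => simp [tmul_zero]
      | tmul c d =>
          simp [TensorProduct.assoc_symm_tmul, Algebra.TensorProduct.tmul_mul_tmul,
            smul_tmul', tmul_smul, mul_smul_comm, smul_mul_assoc]
      | add t₁ t₂ h₁ h₂ =>
          simp only [tmul_add, mul_add, map_add, h₁, h₂]
  | add s₁ s₂ h₁ h₂ =>
      simp only [add_tmul, add_mul, map_add, h₁, h₂]

lemma J6 (x : H) (s t : H ⊗[k] H) :
    Th' x ((s ⊗ₜ[k] (1 : H)) * ((TensorProduct.assoc k H H H).symm ((1 : H) ⊗ₜ[k] t))) =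
      s * ((1 : H) ⊗ₜ[k] Ts k H (x ⊗ₜ[k] t)) := by
  induction s using TensorProduct.induction_on with
  | zero => simp [zero_tmul]
  | tmul a b =>
      induction t using TensorProduct.induction_on with
      | zero => simp [tmul_zero]
      | tmul c d =>
          simp [TensorProduct.assoc_symm_tmul, Algebra.TensorProduct.tmul_mul_tmul,
            smul_tmul', tmul_smul, mul_smul_comm, smul_mul_assoc]
      | add t₁ t₂ h₁ h₂ =>
          simp only [tmul_add, mul_add, map_add, h₁, h₂]
  | add s₁ s₂ h₁ h₂ =>
      simp only [add_tmul, add_mul, map_add, h₁, h₂]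

lemma J7 (x : H) (s t : H ⊗[k] H) :
    Th' x (((TensorProduct.assoc k H H H).symm ((1 : H) ⊗ₜ[k] s)) * (t ⊗ₜ[k] (1 : H))) =
      ((1 : H) ⊗ₜ[k] Ts k H (x ⊗ₜ[k] s)) * t := by
  induction s using TensorProduct.induction_on with
  | zero => simp [tmul_zero]
  | tmul c d =>
      induction t using TensorProduct.induction_on with
      | zero => simp [tmul_zero]
      | tmul a b =>
          simp [TensorProduct.assoc_symm_tmul, Algebra.TensorProduct.tmul_mul_tmul,
            smul_tmul', tmul_smul, mul_smul_comm, smul_mul_assoc]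
      | add t₁ t₂ h₁ h₂ =>
          simp only [add_tmul, mul_add, map_add, h₁, h₂]
  | add s₁ s₂ h₁ h₂ =>
      simp only [tmul_add, map_add, add_mul, h₁, h₂]

lemma Tt_one (s : H ⊗[k] H) :
    Tt k H (s ⊗ₜ[k] (1 : H)) =
      TensorProduct.lid k H ((Coalgebra.counit (R := k)).rTensor H s) := by
  induction s using TensorProduct.induction_on with
  | zero => simp [zero_tmul]
  | tmul a b => simp
  | add u v hu hv => simp only [add_tmul, map_add, hu, hv]

lemma Ts_one (s : H ⊗[k] H) :
    Ts k H ((1 : H) ⊗ₜ[k] s) =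
      TensorProduct.rid k H ((Coalgebra.counit (R := k)).lTensor H s) := by
  induction s using TensorProduct.induction_on with
  | zero => simp [tmul_zero]
  | tmul a b => simp
  | add u v hu hv => simp only [tmul_add, map_add, hu, hv]

lemma lemN (z w : H) (u : H ⊗[k] H) :
    (Coalgebra.counit (R := k)).rTensor H ((z ⊗ₜ[k] (1 : H)) * u * (w ⊗ₜ[k] (1 : H))) =
      (Coalgebra.counit (R := k) ∘ₗ LinearMap.mulRight k w ∘ₗ LinearMap.mulLeft k z).rTensor H
        u := by
  induction u using TensorProduct.induction_on with
  | zero => simp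
  | tmul a b => simp [Algebra.TensorProduct.tmul_mul_tmul]
  | add u v hu hv => simp only [mul_add, add_mul, map_add, hu, hv]

lemma lemN' (z w : H) (u : H ⊗[k] H) :
    (Coalgebra.counit (R := k)).lTensor H (((1 : H) ⊗ₜ[k] z) * u * ((1 : H) ⊗ₜ[k] w)) =
      LinearMap.lTensor H
        (Coalgebra.counit (R := k) ∘ₗ LinearMap.mulRight k w ∘ₗ LinearMap.mulLeft k z) u := by
  induction u using TensorProduct.induction_on with
  | zero => simp
  | tmul a b => simp [Algebra.TensorProduct.tmul_mul_tmul]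
  | add u v hu hv => simp only [mul_add, add_mul, map_add, hu, hv]

lemma lemP (ψ : H →ₗ[k] k) (f : H →ₗ[k] H) (u : H ⊗[k] H) :
    TensorProduct.lid k H (ψ.rTensor H (LinearMap.lTensor H f u)) =
      f (TensorProduct.lid k H (ψ.rTensor H u)) := by
  induction u using TensorProduct.induction_on with
  | zero => simp
  | tmul a b => simp
  | add u v hu hv => simp only [map_add, hu, hv]

lemma lemP' (ψ : H →ₗ[k] k) (f : H →ₗ[k] H) (u : H ⊗[k] H) :
    TensorProduct.rid k H (LinearMap.lTensor H ψ (LinearMap.rTensor H f u)) =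
      f (TensorProduct.rid k H (LinearMap.lTensor H ψ u)) := by
  induction u using TensorProduct.induction_on with
  | zero => simp
  | tmul a b => simp
  | add u v hu hv => simp only [map_add, hu, hv]

lemma memM1 (f : H →ₗ[k] H) (u : H ⊗[k] H) (z : H) :
    (LinearMap.lTensor H f u) * (z ⊗ₜ[k] (1 : H)) ∈
      LinearMap.range (LinearMap.lTensor H (LinearMap.range f).subtype) := by
  induction u using TensorProduct.induction_on with
  | zero => simp
  | tmul a b =>
      exact ⟨(a * z) ⊗ₜ[k] (⟨f b, ⟨b, rfl⟩⟩ : LinearMap.range f),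
        by simp [Algebra.TensorProduct.tmul_mul_tmul]⟩
  | add u v hu hv =>
      rw [map_add, add_mul]
      exact Submodule.add_mem _ hu hv

lemma memM2 (f : H →ₗ[k] H) (u : H ⊗[k] H) (z : H) :
    (LinearMap.rTensor H f u) * ((1 : H) ⊗ₜ[k] z) ∈
      LinearMap.range (LinearMap.rTensor H (LinearMap.range f).subtype) := by
  induction u using TensorProduct.induction_on with
  | zero => simp
  | tmul a b =>
      exact ⟨(⟨f a, ⟨a, rfl⟩⟩ : LinearMap.range f) ⊗ₜ[k] (b * z),
        by simp [Algebra.TensorProduct.tmul_mul_tmul]⟩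
  | add u v hu hv =>
      rw [map_add, add_mul]
      exact Submodule.add_mem _ hu hv

lemma memM3 (f g : H →ₗ[k] H) (u : H ⊗[k] H) :
    TensorProduct.map f g u ∈
      LinearMap.range (TensorProduct.map (LinearMap.range f).subtype
        (LinearMap.range g).subtype) := by
  induction u using TensorProduct.induction_on with
  | zero => simp
  | tmul a b =>
      exact ⟨(⟨f a, ⟨a, rfl⟩⟩ : LinearMap.range f) ⊗ₜ[k] (⟨g b, ⟨b, rfl⟩⟩ : LinearMap.range g),
        by simp⟩
  | add u v hu hv =>
      rw [map_add]
      exact Submodule.add_mem _ hu hv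

section WB
variable [WeakBialgebra k H]

lemma R1 : LinearMap.lTensor H (epsT k H) (Coalgebra.comul (R := k) (1 : H)) =
    Coalgebra.comul (R := k) (1 : H) := by
  rw [epsT_eq, ← key1, ← WeakBialgebra.comul_one_right, Phi_rTensor_comul]

lemma R2 : LinearMap.rTensor H (epsS k H) (Coalgebra.comul (R := k) (1 : H)) =
    Coalgebra.comul (R := k) (1 : H) := by
  rw [epsS_eq, ← key2, ← WeakBialgebra.comul_one_right, Phi_rTensor_comul]

lemma C1 (x : H) : Coalgebra.comul (R := k) (epsT k H x) =
    Coalgebra.comul (R := k) (1 : H) * (epsT k H x ⊗ₜ[k] (1 : H)) := by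
  rw [epsT_apply, ← J1, ← Coalgebra.coassoc_apply, WeakBialgebra.comul_one_right, J4]

lemma C2 (x : H) : Coalgebra.comul (R := k) (epsT k H x) =
    (epsT k H x ⊗ₜ[k] (1 : H)) * Coalgebra.comul (R := k) (1 : H) := by
  rw [epsT_apply, ← J1, ← Coalgebra.coassoc_apply, WeakBialgebra.comul_one_left, J5]

lemma C3 (x : H) : Coalgebra.comul (R := k) (epsS k H x) =
    Coalgebra.comul (R := k) (1 : H) * ((1 : H) ⊗ₜ[k] epsS k H x) := by
  rw [epsS_apply, ← J2, WeakBialgebra.comul_one_left, J6]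

lemma C4 (x : H) : Coalgebra.comul (R := k) (epsS k H x) =
    ((1 : H) ⊗ₜ[k] epsS k H x) * Coalgebra.comul (R := k) (1 : H) := by
  rw [epsS_apply, ← J2, WeakBialgebra.comul_one_right, J7]

lemma epsT_one : epsT k H (1 : H) = 1 := by
  rw [epsT_apply, Tt_one, Coalgebra.rTensor_counit_comul]
  simp

lemma epsS_one : epsS k H (1 : H) = 1 := by
  rw [epsS_apply, Ts_one, Coalgebra.lTensor_counit_comul]
  simp

lemma comul_one_idem :
    Coalgebra.comul (R := k) (1 : H) * Coalgebra.comul (R := k) (1 : H) =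
      Coalgebra.comul (R := k) (1 : H) := by
  rw [← WeakBialgebra.comul_mul, one_mul]

lemma counit_extract (h : H) :
    TensorProduct.lid k H ((Coalgebra.counit (R := k)).rTensor H (Coalgebra.comul (R := k) h))
      = h := by
  rw [Coalgebra.rTensor_counit_comul]; simp

lemma counit_extract' (h : H) :
    TensorProduct.rid k H ((Coalgebra.counit (R := k)).lTensor H (Coalgebra.comul (R := k) h))
      = h := by
  rw [Coalgebra.lTensor_counit_comul]; simp

lemma prodT (x y : H) : epsT k H x * epsT k H y ∈ LinearMap.range (epsT k H) := by
  set z := epsT k H x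
  set w := epsT k H y
  have hcm : Coalgebra.comul (R := k) (z * w) = (z ⊗ₜ[k] (1 : H)) * Coalgebra.comul (R := k) (1 : H) * (w ⊗ₜ[k] (1 : H)) := by
    rw [WeakBialgebra.comul_mul, C2 x, C1 y]
    calc (z ⊗ₜ[k] (1:H)) * Coalgebra.comul (R := k) (1 : H) * (Coalgebra.comul (R := k) (1 : H) * (w ⊗ₜ[k] (1:H)))
        = (z ⊗ₜ[k] (1:H)) * (Coalgebra.comul (R := k) (1 : H) * Coalgebra.comul (R := k) (1 : H)) * (w ⊗ₜ[k] (1:H)) := by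
          rw [mul_assoc, mul_assoc, mul_assoc]
      _ = (z ⊗ₜ[k] (1:H)) * Coalgebra.comul (R := k) (1 : H) * (w ⊗ₜ[k] (1:H)) := by rw [comul_one_idem]
  have hzw : z * w =
      TensorProduct.lid k H
        ((Coalgebra.counit (R := k) ∘ₗ LinearMap.mulRight k w ∘ₗ
          LinearMap.mulLeft k z).rTensor H (Coalgebra.comul (R := k) (1 : H))) := by
    conv_lhs => rw [← counit_extract (k := k) (z * w), hcm, lemN]
  rw [hzw, ← R1 (k := k) (H := H), lemP]
  exact ⟨_, rfl⟩

lemma prodS (x y : H) : epsS k H x * epsS k H y ∈ LinearMap.range (epsS k H) := by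
  set z := epsS k H x
  set w := epsS k H y
  have hcm : Coalgebra.comul (R := k) (z * w) =
      ((1 : H) ⊗ₜ[k] z) * Coalgebra.comul (R := k) (1 : H) * ((1 : H) ⊗ₜ[k] w) := by
    rw [WeakBialgebra.comul_mul, C4 x, C3 y]
    calc ((1:H) ⊗ₜ[k] z) * Coalgebra.comul (R := k) (1 : H) * (Coalgebra.comul (R := k) (1 : H) * ((1:H) ⊗ₜ[k] w))
        = ((1:H) ⊗ₜ[k] z) * (Coalgebra.comul (R := k) (1 : H) * Coalgebra.comul (R := k) (1 : H)) * ((1:H) ⊗ₜ[k] w) := by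
          rw [mul_assoc, mul_assoc, mul_assoc]
      _ = ((1:H) ⊗ₜ[k] z) * Coalgebra.comul (R := k) (1 : H) * ((1:H) ⊗ₜ[k] w) := by rw [comul_one_idem]
  have hzw : z * w =
      TensorProduct.rid k H
        (LinearMap.lTensor H (Coalgebra.counit (R := k) ∘ₗ LinearMap.mulRight k w ∘ₗ
          LinearMap.mulLeft k z) (Coalgebra.comul (R := k) (1 : H))) := by
    conv_lhs => rw [← counit_extract' (k := k) (z * w), hcm, lemN']
  rw [hzw, ← R2 (k := k) (H := H), lemP']
  exact ⟨_, rfl⟩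

end WB

end WBAux

open WBAux in
/-- `H_t` is a unital subalgebra of `H` and a left coideal (`Δ(H_t) ⊆ H ⊗ H_t`),
`H_s` is a unital subalgebra of `H` and a right coideal (`Δ(H_s) ⊆ H_s ⊗ H`),
and `Δ(1) ∈ H_s ⊗ H_t`. -/
theorem range_epsT_subalgebra_coideal [WeakBialgebra k H] :
    (1 : H) ∈ LinearMap.range (epsT k H) ∧
    (∀ x ∈ LinearMap.range (epsT k H), ∀ y ∈ LinearMap.range (epsT k H),
      x * y ∈ LinearMap.range (epsT k H)) ∧
    (∀ x ∈ LinearMap.range (epsT k H), Coalgebra.comul (R := k) x ∈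
      LinearMap.range (LinearMap.lTensor H (LinearMap.range (epsT k H)).subtype)) ∧
    (1 : H) ∈ LinearMap.range (epsS k H) ∧
    (∀ x ∈ LinearMap.range (epsS k H), ∀ y ∈ LinearMap.range (epsS k H),
      x * y ∈ LinearMap.range (epsS k H)) ∧
    (∀ x ∈ LinearMap.range (epsS k H), Coalgebra.comul (R := k) x ∈
      LinearMap.range (LinearMap.rTensor H (LinearMap.range (epsS k H)).subtype)) ∧
    Coalgebra.comul (R := k) (1 : H) ∈
      LinearMap.range (TensorProduct.map (LinearMap.range (epsS k H)).subtype
        (LinearMap.range (epsT k H)).subtype) := by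
  refine ⟨⟨1, epsT_one⟩, ?_, ?_, ⟨1, epsS_one⟩, ?_, ?_, ?_⟩
  · rintro x ⟨x', rfl⟩ y ⟨y', rfl⟩
    exact prodT x' y'
  · rintro x ⟨x', rfl⟩
    rw [C1 x', ← R1]
    exact memM1 (epsT k H) _ _
  · rintro x ⟨x', rfl⟩ y ⟨y', rfl⟩
    exact prodS x' y'
  · rintro x ⟨x', rfl⟩
    rw [C3 x', ← R2]
    exact memM2 (epsS k H) _ _
  · have h : TensorProduct.map (epsS k H) (epsT k H) (Coalgebra.comul (R := k) (1 : H)) =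
        Coalgebra.comul (R := k) (1 : H) := by
      rw [← LinearMap.lTensor_comp_rTensor, LinearMap.comp_apply, R2, R1]
    rw [← h]
    exact memM3 _ _ _
end
end

section
/- Let H be a weak bialgebra and (M, ρ) a right H-comodule, with ρ(m) = m_(0) ⊗ m_(1). Define, for y ∈ H_s = ε_s(H) and m ∈ M, the elements y · m := m_(0) ε(y m_(1)) and m · y := m_(0) ε(m_(1) y). Then these operations make M an (H_s, H_s)-bimodule: 1 · m = m = m · 1, (y y′) · m = y · (y′ · m), m · (y y′) = (m · y) · y′, and (y · m) · y′ = y · (m · y′) for all y, y′ ∈ H_s and m ∈ M. -/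
open TensorProduct

noncomputable section

variable (k H : Type*) [Field k] [Ring H] [Algebra k H] [Coalgebra k H]

/-- `ρ : M →ₗ M ⊗ H` is a (coassociative, counital) right `H`-coaction. -/
def IsCoaction (M : Type*) [AddCommGroup M] [Module k M] (ρ : M →ₗ[k] M ⊗[k] H) : Prop :=
  LinearMap.rTensor H ρ ∘ₗ ρ =
    (TensorProduct.assoc k M H H).symm.toLinearMap ∘ₗ
      LinearMap.lTensor M (Coalgebra.comul (R := k)) ∘ₗ ρ ∧
  (TensorProduct.rid k M).toLinearMap ∘ₗ LinearMap.lTensor M (Coalgebra.counit (R := k)) ∘ₗ ρ =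
    LinearMap.id

/-- The left action `y · m = Σ m₍₀₎ ε(y m₍₁₎)` of `H` on a right `H`-comodule `M`. -/
def smulL (M : Type*) [AddCommGroup M] [Module k M] (ρ : M →ₗ[k] M ⊗[k] H)
    (y : H) (m : M) : M :=
  (TensorProduct.rid k M)
    (LinearMap.lTensor M (Coalgebra.counit ∘ₗ LinearMap.mulLeft k y) (ρ m))

/-- The right action `m · y = Σ m₍₀₎ ε(m₍₁₎ y)` of `H` on a right `H`-comodule `M`. -/
def smulR (M : Type*) [AddCommGroup M] [Module k M] (ρ : M →ₗ[k] M ⊗[k] H)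
    (m : M) (y : H) : M :=
  (TensorProduct.rid k M)
    (LinearMap.lTensor M (Coalgebra.counit ∘ₗ LinearMap.mulRight k y) (ρ m))


section AuxLemmas

set_option synthInstance.maxHeartbeats 400000

open Coalgebra LinearMap

lemma epsT_apply (S : Finset (H × H))
    (hS : Coalgebra.comul (R := k) (1 : H) = ∑ p ∈ S, p.1 ⊗ₜ[k] p.2) (x : H) :
    epsT k H x = ∑ p ∈ S, Coalgebra.counit (R := k) (p.1 * x) • p.2 := by
  simp only [epsT, LinearMap.coe_comp, Function.comp_apply, LinearEquiv.coe_coe,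
    TensorProduct.mk_apply, hS]
  rw [TensorProduct.sum_tmul]
  simp [map_sum, TensorProduct.assoc_tmul, TensorProduct.comm_tmul,
    TensorProduct.assoc_symm_tmul, LinearMap.rTensor_tmul, LinearMap.lTensor_tmul,
    LinearMap.mul'_apply, TensorProduct.lid_tmul]

lemma epsS_apply (S : Finset (H × H))
    (hS : Coalgebra.comul (R := k) (1 : H) = ∑ p ∈ S, p.1 ⊗ₜ[k] p.2) (x : H) :
    epsS k H x = ∑ p ∈ S, Coalgebra.counit (R := k) (x * p.2) • p.1 := by
  simp only [epsS, LinearMap.coe_comp, Function.comp_apply, LinearEquiv.coe_coe,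
    LinearMap.flip_apply, TensorProduct.mk_apply, hS]
  rw [TensorProduct.tmul_sum]
  simp [map_sum, TensorProduct.comm_tmul, TensorProduct.assoc_symm_tmul,
    LinearMap.rTensor_tmul, LinearMap.lTensor_tmul,
    LinearMap.mul'_apply, TensorProduct.lid_tmul]

variable [WeakBialgebra k H]

lemma core_sum (x z : H) (S : Finset (H × H))
    (hS : Coalgebra.comul (R := k) (1 : H) = ∑ p ∈ S, p.1 ⊗ₜ[k] p.2) :
    ∑ p ∈ S, Coalgebra.counit (R := k) (p.1 * z) * Coalgebra.counit (R := k) (x * p.2)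
      = Coalgebra.counit (R := k) (x * z) := by
  have h := WeakBialgebra.counit_mul_mul' (k := k) x (1 : H) z
  rw [mul_one] at h
  rw [h, hS]
  simp [map_sum, TensorProduct.map_tmul, LinearMap.mul'_apply]

lemma epsL_comp_epsT (x : H) :
    (Coalgebra.counit ∘ₗ LinearMap.mulLeft k x) ∘ₗ epsT k H
      = Coalgebra.counit (R := k) ∘ₗ LinearMap.mulLeft k x := by
  obtain ⟨S, hS⟩ := TensorProduct.exists_finset (Coalgebra.comul (R := k) (1 : H))
  ext z
  simp only [LinearMap.coe_comp, Function.comp_apply, LinearMap.mulLeft_apply]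
  rw [epsT_apply k H S hS, Finset.mul_sum]
  simp only [map_sum, mul_smul_comm, map_smul, smul_eq_mul]
  exact core_sum k H x z S hS

lemma epsR_comp_epsS (z : H) :
    (Coalgebra.counit ∘ₗ LinearMap.mulRight k z) ∘ₗ epsS k H
      = Coalgebra.counit (R := k) ∘ₗ LinearMap.mulRight k z := by
  obtain ⟨S, hS⟩ := TensorProduct.exists_finset (Coalgebra.comul (R := k) (1 : H))
  ext x
  simp only [LinearMap.coe_comp, Function.comp_apply, LinearMap.mulRight_apply]
  rw [epsS_apply k H S hS, Finset.sum_mul]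
  simp only [map_sum, smul_mul_assoc, map_smul, smul_eq_mul]
  rw [← core_sum k H x z S hS]
  exact Finset.sum_congr rfl fun p _ => mul_comm _ _

lemma epsL_epsS (w : H) :
    Coalgebra.counit ∘ₗ LinearMap.mulLeft k (epsS k H w)
      = Coalgebra.counit (R := k) ∘ₗ LinearMap.mulLeft k w := by
  obtain ⟨S, hS⟩ := TensorProduct.exists_finset (Coalgebra.comul (R := k) (1 : H))
  ext z
  simp only [LinearMap.coe_comp, Function.comp_apply, LinearMap.mulLeft_apply]
  rw [epsS_apply k H S hS, Finset.sum_mul]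
  simp only [map_sum, smul_mul_assoc, map_smul, smul_eq_mul]
  rw [← core_sum k H w z S hS]
  exact Finset.sum_congr rfl fun p _ => mul_comm _ _

lemma epsR_epsT (u : H) :
    Coalgebra.counit ∘ₗ LinearMap.mulRight k (epsT k H u)
      = Coalgebra.counit (R := k) ∘ₗ LinearMap.mulRight k u := by
  obtain ⟨S, hS⟩ := TensorProduct.exists_finset (Coalgebra.comul (R := k) (1 : H))
  ext x
  simp only [LinearMap.coe_comp, Function.comp_apply, LinearMap.mulRight_apply]
  rw [epsT_apply k H S hS, Finset.mul_sum]
  simp only [map_sum, mul_smul_comm, map_smul, smul_eq_mul]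
  exact core_sum k H x u S hS

lemma factB (h : H) :
    LinearMap.lTensor H (epsT k H) (Coalgebra.comul (R := k) h) =
    LinearMap.rTensor H (LinearMap.mulRight k h) (Coalgebra.comul (R := k) (1 : H)) := by
  obtain ⟨S, hS⟩ := TensorProduct.exists_finset (Coalgebra.comul (R := k) (1 : H))
  obtain ⟨T, hT⟩ := TensorProduct.exists_finset (Coalgebra.comul (R := k) h)
  set Mh : H ⊗[k] H →ₗ[k] H :=
    (TensorProduct.rid k H).toLinearMap ∘ₗ LinearMap.lTensor H (Coalgebra.counit (R := k))
      ∘ₗ LinearMap.mulRight k (Coalgebra.comul (R := k) h) with hMh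
  have hMδ : ∀ x : H, Mh (Coalgebra.comul (R := k) x) = x * h := by
    intro x
    simp only [hMh, LinearMap.coe_comp, Function.comp_apply, LinearMap.mulRight_apply]
    rw [← WeakBialgebra.comul_mul (k := k) x h]
    simp
  have hMtm : ∀ a b : H, Mh (a ⊗ₜ[k] b) =
      ∑ q ∈ T, Coalgebra.counit (R := k) (b * q.2) • (a * q.1) := by
    intro a b
    simp only [hMh, LinearMap.coe_comp, Function.comp_apply, LinearMap.mulRight_apply, hT,
      Finset.mul_sum, Algebra.TensorProduct.tmul_mul_tmul]
    simp [map_sum, TensorProduct.lid_tmul]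
  have key := congrArg (LinearMap.rTensor H Mh) (WeakBialgebra.comul_one_right (k := k) (H := H))
  have lhs_eq : LinearMap.rTensor H Mh
      (LinearMap.rTensor H (Coalgebra.comul (R := k)) (Coalgebra.comul (R := k) (1:H))) =
      LinearMap.rTensor H (LinearMap.mulRight k h) (Coalgebra.comul (R := k) (1 : H)) := by
    conv_lhs => rw [hS]
    conv_rhs => rw [hS]
    simp only [map_sum, LinearMap.rTensor_tmul, LinearMap.mulRight_apply]
    exact Finset.sum_congr rfl fun p _ => by rw [hMδ]
  have exp1 : (TensorProduct.assoc k H H H).symm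
        ((1:H) ⊗ₜ[k] Coalgebra.comul (R := k) (1:H)) *
        (Coalgebra.comul (R := k) (1:H) ⊗ₜ[k] (1:H))
      = ∑ r ∈ S, ∑ p ∈ S, (p.1 ⊗ₜ[k] (r.1 * p.2)) ⊗ₜ[k] r.2 := by
    rw [hS, TensorProduct.tmul_sum, map_sum, TensorProduct.sum_tmul, Finset.sum_mul_sum]
    simp [TensorProduct.assoc_symm_tmul, Algebra.TensorProduct.tmul_mul_tmul]
  have rhs_eq : LinearMap.rTensor H Mh
      ((TensorProduct.assoc k H H H).symm
        ((1:H) ⊗ₜ[k] Coalgebra.comul (R := k) (1:H)) *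
        (Coalgebra.comul (R := k) (1:H) ⊗ₜ[k] (1:H))) =
      LinearMap.lTensor H (epsT k H) (Coalgebra.comul (R := k) h) := by
    rw [exp1]
    have hch : Coalgebra.comul (R := k) h
        = Coalgebra.comul (R := k) (1:H) * Coalgebra.comul (R := k) h := by
      rw [← WeakBialgebra.comul_mul (k := k) (1:H) h, one_mul]
    conv_rhs => rw [hch, hS, hT, Finset.sum_mul_sum]
    simp only [map_sum, LinearMap.rTensor_tmul, LinearMap.lTensor_tmul,
      Algebra.TensorProduct.tmul_mul_tmul, hMtm]
    simp only [epsT_apply k H S hS]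
    simp only [Finset.sum_smul, TensorProduct.smul_tmul', TensorProduct.sum_tmul,
      TensorProduct.tmul_smul, TensorProduct.tmul_sum]
    rw [Finset.sum_comm]
    refine Finset.sum_congr rfl fun p _ => ?_
    rw [Finset.sum_comm]
    refine Finset.sum_congr rfl fun q _ => Finset.sum_congr rfl fun r _ => ?_
    rw [mul_assoc]
  rw [← lhs_eq, key, rhs_eq]

private lemma sum_rot {A B C N : Type*} [AddCommMonoid N] (s : Finset A) (t : Finset B)
    (u : Finset C) (g : A → B → C → N) :
    ∑ a ∈ s, ∑ b ∈ t, ∑ c ∈ u, g a b c = ∑ c ∈ u, ∑ a ∈ s, ∑ b ∈ t, g a b c :=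
  (Finset.sum_congr rfl fun _ _ => Finset.sum_comm).trans Finset.sum_comm

lemma factA (h : H) :
    LinearMap.rTensor H (epsS k H) (Coalgebra.comul (R := k) h) =
    LinearMap.lTensor H (LinearMap.mulLeft k h) (Coalgebra.comul (R := k) (1 : H)) := by
  obtain ⟨S, hS⟩ := TensorProduct.exists_finset (Coalgebra.comul (R := k) (1 : H))
  obtain ⟨T, hT⟩ := TensorProduct.exists_finset (Coalgebra.comul (R := k) h)
  set Nh : H ⊗[k] H →ₗ[k] H :=
    (TensorProduct.lid k H).toLinearMap ∘ₗ LinearMap.rTensor H (Coalgebra.counit (R := k))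
      ∘ₗ LinearMap.mulLeft k (Coalgebra.comul (R := k) h) with hNh
  have hNδ : ∀ x : H, Nh (Coalgebra.comul (R := k) x) = h * x := by
    intro x
    simp only [hNh, LinearMap.coe_comp, Function.comp_apply, LinearMap.mulLeft_apply]
    rw [← WeakBialgebra.comul_mul (k := k) h x]
    simp
  have hNtm : ∀ a b : H, Nh (a ⊗ₜ[k] b) =
      ∑ q ∈ T, Coalgebra.counit (R := k) (q.1 * a) • (q.2 * b) := by
    intro a b
    simp only [hNh, LinearMap.coe_comp, Function.comp_apply, LinearMap.mulLeft_apply, hT,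
      Finset.sum_mul, Algebra.TensorProduct.tmul_mul_tmul]
    simp [map_sum, TensorProduct.lid_tmul]
  have exp1 : (TensorProduct.assoc k H H H).symm
        ((1:H) ⊗ₜ[k] Coalgebra.comul (R := k) (1:H)) *
        (Coalgebra.comul (R := k) (1:H) ⊗ₜ[k] (1:H))
      = ∑ r ∈ S, ∑ p ∈ S, (p.1 ⊗ₜ[k] (r.1 * p.2)) ⊗ₜ[k] r.2 := by
    rw [hS, TensorProduct.tmul_sum, map_sum, TensorProduct.sum_tmul, Finset.sum_mul_sum]
    simp [TensorProduct.assoc_symm_tmul, Algebra.TensorProduct.tmul_mul_tmul]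
  have key : (TensorProduct.assoc k H H H)
        ((TensorProduct.assoc k H H H).symm
          ((1:H) ⊗ₜ[k] Coalgebra.comul (R := k) (1:H)) *
          (Coalgebra.comul (R := k) (1:H) ⊗ₜ[k] (1:H)))
      = LinearMap.lTensor H (Coalgebra.comul (R := k)) (Coalgebra.comul (R := k) (1:H)) := by
    rw [← WeakBialgebra.comul_one_right (k := k) (H := H)]
    exact Coalgebra.coassoc_apply (1 : H)
  have rhs_eq : LinearMap.lTensor H Nh
      (LinearMap.lTensor H (Coalgebra.comul (R := k)) (Coalgebra.comul (R := k) (1:H))) =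
      LinearMap.lTensor H (LinearMap.mulLeft k h) (Coalgebra.comul (R := k) (1 : H)) := by
    conv_lhs => rw [hS]
    conv_rhs => rw [hS]
    simp only [map_sum, LinearMap.lTensor_tmul, LinearMap.mulLeft_apply]
    exact Finset.sum_congr rfl fun p _ => by rw [hNδ]
  have lhs_eq : LinearMap.lTensor H Nh
      ((TensorProduct.assoc k H H H)
        ((TensorProduct.assoc k H H H).symm
          ((1:H) ⊗ₜ[k] Coalgebra.comul (R := k) (1:H)) *
          (Coalgebra.comul (R := k) (1:H) ⊗ₜ[k] (1:H))))
      = LinearMap.rTensor H (epsS k H) (Coalgebra.comul (R := k) h) := by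
    rw [exp1]
    have hch : Coalgebra.comul (R := k) h
        = Coalgebra.comul (R := k) h * Coalgebra.comul (R := k) (1:H) := by
      rw [← WeakBialgebra.comul_mul (k := k) h (1:H), mul_one]
    conv_rhs => rw [hch, hT, hS, Finset.sum_mul_sum]
    simp only [map_sum, TensorProduct.assoc_tmul, LinearMap.lTensor_tmul,
      LinearMap.rTensor_tmul, Algebra.TensorProduct.tmul_mul_tmul, hNtm]
    simp only [epsS_apply k H S hS]
    simp only [Finset.sum_smul, TensorProduct.smul_tmul', TensorProduct.sum_tmul,
      TensorProduct.tmul_smul, TensorProduct.tmul_sum]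
    rw [sum_rot]
    refine Finset.sum_congr rfl fun q _ => Finset.sum_congr rfl fun r _ =>
      Finset.sum_congr rfl fun p _ => ?_
    rw [mul_assoc]
  rw [← lhs_eq, key, rhs_eq]

lemma epsS_mul_epsT (v u : H) :
    epsS k H v * epsT k H u = epsT k H u * epsS k H v := by
  obtain ⟨S, hS⟩ := TensorProduct.exists_finset (Coalgebra.comul (R := k) (1 : H))
  have key : (Coalgebra.comul (R := k) (1:H) ⊗ₜ[k] (1:H)) *
        (TensorProduct.assoc k H H H).symm ((1:H) ⊗ₜ[k] Coalgebra.comul (R := k) (1:H))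
      = (TensorProduct.assoc k H H H).symm ((1:H) ⊗ₜ[k] Coalgebra.comul (R := k) (1:H)) *
        (Coalgebra.comul (R := k) (1:H) ⊗ₜ[k] (1:H)) :=
    (WeakBialgebra.comul_one_left (k := k) (H := H)).symm.trans
      (WeakBialgebra.comul_one_right (k := k) (H := H))
  set J : (H ⊗[k] H) ⊗[k] H →ₗ[k] H :=
    (TensorProduct.rid k H).toLinearMap
      ∘ₗ LinearMap.lTensor H (Coalgebra.counit ∘ₗ LinearMap.mulLeft k v)
      ∘ₗ LinearMap.rTensor H ((TensorProduct.lid k H).toLinearMap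
          ∘ₗ LinearMap.rTensor H (Coalgebra.counit ∘ₗ LinearMap.mulRight k u)) with hJ
  have hJtm : ∀ x y z : H, J ((x ⊗ₜ[k] y) ⊗ₜ[k] z) =
      (Coalgebra.counit (R := k) (x * u) * Coalgebra.counit (R := k) (v * z)) • y := by
    intro x y z
    simp [hJ, TensorProduct.lid_tmul, TensorProduct.rid_tmul, TensorProduct.smul_tmul',
      mul_smul, mul_comm]
  have e1 : (Coalgebra.comul (R := k) (1:H) ⊗ₜ[k] (1:H)) *
        (TensorProduct.assoc k H H H).symm ((1:H) ⊗ₜ[k] Coalgebra.comul (R := k) (1:H))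
      = ∑ p ∈ S, ∑ r ∈ S, (p.1 ⊗ₜ[k] (p.2 * r.1)) ⊗ₜ[k] r.2 := by
    rw [hS, TensorProduct.tmul_sum, map_sum, TensorProduct.sum_tmul, Finset.sum_mul_sum]
    simp [TensorProduct.assoc_symm_tmul, Algebra.TensorProduct.tmul_mul_tmul]
  have e2 : (TensorProduct.assoc k H H H).symm
        ((1:H) ⊗ₜ[k] Coalgebra.comul (R := k) (1:H)) *
        (Coalgebra.comul (R := k) (1:H) ⊗ₜ[k] (1:H))
      = ∑ r ∈ S, ∑ p ∈ S, (p.1 ⊗ₜ[k] (r.1 * p.2)) ⊗ₜ[k] r.2 := by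
    rw [hS, TensorProduct.tmul_sum, map_sum, TensorProduct.sum_tmul, Finset.sum_mul_sum]
    simp [TensorProduct.assoc_symm_tmul, Algebra.TensorProduct.tmul_mul_tmul]
  have hkey := congrArg J key
  rw [e1, e2] at hkey
  simp only [map_sum, hJtm] at hkey
  have lhs2 : ∑ p ∈ S, ∑ r ∈ S,
      (Coalgebra.counit (R := k) (p.1 * u) * Coalgebra.counit (R := k) (v * r.2)) • (p.2 * r.1)
      = epsT k H u * epsS k H v := by
    rw [epsT_apply k H S hS, epsS_apply k H S hS, Finset.sum_mul_sum]
    refine Finset.sum_congr rfl fun p _ => Finset.sum_congr rfl fun r _ => ?_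
    rw [smul_mul_assoc, mul_smul_comm, smul_smul]
  have rhs2 : ∑ r ∈ S, ∑ p ∈ S,
      (Coalgebra.counit (R := k) (p.1 * u) * Coalgebra.counit (R := k) (v * r.2)) • (r.1 * p.2)
      = epsS k H v * epsT k H u := by
    rw [epsT_apply k H S hS, epsS_apply k H S hS, Finset.sum_mul_sum]
    refine Finset.sum_congr rfl fun r _ => Finset.sum_congr rfl fun p _ => ?_
    rw [smul_mul_assoc, mul_smul_comm, smul_smul, mul_comm (Coalgebra.counit (R := k) (v * r.2))]
  rw [lhs2, rhs2] at hkey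
  exact hkey.symm

lemma claimL (y w h : H) :
    LinearMap.mul' k k (TensorProduct.map
      (Coalgebra.counit ∘ₗ LinearMap.mulLeft k y)
      (Coalgebra.counit ∘ₗ LinearMap.mulLeft k (epsS k H w))
      (Coalgebra.comul (R := k) h))
    = Coalgebra.counit (R := k) ((y * epsS k H w) * h) := by
  obtain ⟨S, hS⟩ := TensorProduct.exists_finset (Coalgebra.comul (R := k) (1 : H))
  obtain ⟨T, hT⟩ := TensorProduct.exists_finset (Coalgebra.comul (R := k) h)
  rw [epsL_epsS]
  have lhs1 : LinearMap.mul' k k (TensorProduct.map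
      (Coalgebra.counit ∘ₗ LinearMap.mulLeft k y)
      (Coalgebra.counit ∘ₗ LinearMap.mulLeft k w)
      (Coalgebra.comul (R := k) h))
      = LinearMap.mul' k k (TensorProduct.map
        (Coalgebra.counit ∘ₗ LinearMap.mulLeft k y)
        (Coalgebra.counit ∘ₗ LinearMap.mulLeft k w)
        (LinearMap.lTensor H (epsT k H) (Coalgebra.comul (R := k) h))) := by
    rw [hT]
    simp only [map_sum, LinearMap.lTensor_tmul, TensorProduct.map_tmul,
      LinearMap.coe_comp, Function.comp_apply, LinearMap.mulLeft_apply,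
      LinearMap.mul'_apply]
    refine Finset.sum_congr rfl fun q _ => ?_
    congr 1
    exact (LinearMap.congr_fun (epsL_comp_epsT k H w) q.2).symm
  rw [lhs1, factB]
  rw [hS]
  simp only [map_sum, LinearMap.rTensor_tmul, TensorProduct.map_tmul,
    LinearMap.coe_comp, Function.comp_apply, LinearMap.mulLeft_apply,
    LinearMap.mulRight_apply, LinearMap.mul'_apply]
  conv_rhs => rw [epsS_apply k H S hS, Finset.mul_sum, Finset.sum_mul, map_sum]
  refine Finset.sum_congr rfl fun p _ => ?_
  simp only [mul_smul_comm, smul_mul_assoc, map_smul, smul_eq_mul]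
  rw [← mul_assoc]
  exact mul_comm _ _

lemma claimR (v y' h : H) :
    LinearMap.mul' k k (TensorProduct.map
      (Coalgebra.counit ∘ₗ LinearMap.mulRight k y')
      (Coalgebra.counit ∘ₗ LinearMap.mulRight k (epsS k H v))
      (Coalgebra.comul (R := k) h))
    = Coalgebra.counit (R := k) (h * (epsS k H v * y')) := by
  obtain ⟨S, hS⟩ := TensorProduct.exists_finset (Coalgebra.comul (R := k) (1 : H))
  obtain ⟨T, hT⟩ := TensorProduct.exists_finset (Coalgebra.comul (R := k) h)
  have lhs1 : LinearMap.mul' k k (TensorProduct.map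
      (Coalgebra.counit ∘ₗ LinearMap.mulRight k y')
      (Coalgebra.counit ∘ₗ LinearMap.mulRight k (epsS k H v))
      (Coalgebra.comul (R := k) h))
      = LinearMap.mul' k k (TensorProduct.map
        (Coalgebra.counit ∘ₗ LinearMap.mulRight k y')
        (Coalgebra.counit ∘ₗ LinearMap.mulRight k (epsS k H v))
        (LinearMap.rTensor H (epsS k H) (Coalgebra.comul (R := k) h))) := by
    rw [hT]
    simp only [map_sum, LinearMap.rTensor_tmul, TensorProduct.map_tmul,
      LinearMap.coe_comp, Function.comp_apply, LinearMap.mulRight_apply,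
      LinearMap.mul'_apply]
    refine Finset.sum_congr rfl fun q _ => ?_
    congr 1
    exact (LinearMap.congr_fun (epsR_comp_epsS k H y') q.1).symm
  rw [lhs1, factA]
  have rhs1 : Coalgebra.counit (R := k) (h * (epsS k H v * y'))
      = Coalgebra.counit (R := k) (h * epsT k H y' * epsS k H v) := by
    conv_rhs => rw [mul_assoc, ← epsS_mul_epsT k H v y', ← mul_assoc]
    have h2 := LinearMap.congr_fun (epsR_epsT k H y') (h * epsS k H v)
    simp only [LinearMap.coe_comp, Function.comp_apply, LinearMap.mulRight_apply] at h2
    rw [h2, mul_assoc]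
  rw [rhs1]
  rw [hS]
  simp only [map_sum, LinearMap.lTensor_tmul, TensorProduct.map_tmul,
    LinearMap.coe_comp, Function.comp_apply, LinearMap.mulRight_apply,
    LinearMap.mulLeft_apply, LinearMap.mul'_apply]
  conv_rhs => rw [epsT_apply k H S hS, Finset.mul_sum, Finset.sum_mul, map_sum]
  refine Finset.sum_congr rfl fun p _ => ?_
  simp only [mul_smul_comm, smul_mul_assoc, map_smul, smul_eq_mul]

lemma rho_contract (M : Type*) [AddCommGroup M] [Module k M] (ρ : M →ₗ[k] M ⊗[k] H)
    (f : H →ₗ[k] k) (x : M ⊗[k] H) :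
    ρ ((TensorProduct.rid k M) (LinearMap.lTensor M f x))
      = (TensorProduct.rid k (M ⊗[k] H))
          (LinearMap.lTensor (M ⊗[k] H) f (LinearMap.rTensor H ρ x)) := by
  induction x using TensorProduct.induction_on with
  | zero => simp
  | tmul m h =>
      simp [TensorProduct.rid_tmul, LinearMap.lTensor_tmul, LinearMap.rTensor_tmul, map_smul]
  | add a b ha hb => simp only [map_add, ha, hb]

lemma keyRed (M : Type*) [AddCommGroup M] [Module k M] (f g φ : H →ₗ[k] k)
    (hyp : ∀ h : H, LinearMap.mul' k k (TensorProduct.map g f (Coalgebra.comul (R := k) h)) = φ h)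
    (x : M ⊗[k] H) :
    (TensorProduct.rid k M) (LinearMap.lTensor M g
      ((TensorProduct.rid k (M ⊗[k] H)) (LinearMap.lTensor (M ⊗[k] H) f
        ((TensorProduct.assoc k M H H).symm
          (LinearMap.lTensor M (Coalgebra.comul (R := k)) x)))))
      = (TensorProduct.rid k M) (LinearMap.lTensor M φ x) := by
  induction x using TensorProduct.induction_on with
  | zero => simp
  | tmul m h =>
      obtain ⟨T, hT⟩ := TensorProduct.exists_finset (Coalgebra.comul (R := k) h)
      have rhs : (TensorProduct.rid k M) (LinearMap.lTensor M φ (m ⊗ₜ[k] h)) = φ h • m := by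
        simp [TensorProduct.rid_tmul]
      rw [rhs, ← hyp h]
      simp only [LinearMap.lTensor_tmul]
      rw [hT]
      simp only [TensorProduct.tmul_sum, map_sum, TensorProduct.assoc_symm_tmul,
        LinearMap.lTensor_tmul, TensorProduct.map_tmul, LinearMap.mul'_apply,
        TensorProduct.rid_tmul, map_smul, smul_smul, Finset.sum_smul]
      exact Finset.sum_congr rfl fun q _ => by rw [mul_comm]
  | add a b ha hb => simp only [map_add, ha, hb]

end AuxLemmas

/-- The actions `y · m = Σ m₍₀₎ ε(y m₍₁₎)` and `m · y = Σ m₍₀₎ ε(m₍₁₎ y)` make a right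
`H`-comodule `M` an `(H_s, H_s)`-bimodule. -/
theorem comodule_bimodule [WeakBialgebra k H] (M : Type*) [AddCommGroup M] [Module k M]
    (ρ : M →ₗ[k] M ⊗[k] H) (hρ : IsCoaction k H M ρ) :
    (∀ m : M, smulL k H M ρ 1 m = m) ∧
    (∀ m : M, smulR k H M ρ m 1 = m) ∧
    (∀ y ∈ LinearMap.range (epsS k H), ∀ y' ∈ LinearMap.range (epsS k H), ∀ m : M,
      smulL k H M ρ (y * y') m = smulL k H M ρ y (smulL k H M ρ y' m) ∧
      smulR k H M ρ m (y * y') = smulR k H M ρ (smulR k H M ρ m y) y' ∧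
      smulR k H M ρ (smulL k H M ρ y m) y' = smulL k H M ρ y (smulR k H M ρ m y')) := by
  obtain ⟨hco, hcu⟩ := hρ
  have hcu' : ∀ m : M, (TensorProduct.rid k M)
      (LinearMap.lTensor M (Coalgebra.counit (R := k)) (ρ m)) = m := by
    intro m
    have h2 := LinearMap.congr_fun hcu m
    simpa using h2
  have compat : ∀ (f : H →ₗ[k] k) (m : M),
      ρ ((TensorProduct.rid k M) (LinearMap.lTensor M f (ρ m)))
        = (TensorProduct.rid k (M ⊗[k] H)) (LinearMap.lTensor (M ⊗[k] H) f
            ((TensorProduct.assoc k M H H).symm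
              (LinearMap.lTensor M (Coalgebra.comul (R := k)) (ρ m)))) := by
    intro f m
    rw [rho_contract k H M ρ f (ρ m)]
    have h3 := LinearMap.congr_fun hco m
    simp only [LinearMap.coe_comp, Function.comp_apply, LinearEquiv.coe_coe] at h3
    rw [h3]
  refine ⟨fun m => ?_, fun m => ?_, ?_⟩
  · simp only [smulL, LinearMap.mulLeft_one, LinearMap.comp_id]
    exact hcu' m
  · simp only [smulR, LinearMap.mulRight_one, LinearMap.comp_id]
    exact hcu' m
  rintro y ⟨v, rfl⟩ y' ⟨w, rfl⟩ m
  refine ⟨?_, ?_, ?_⟩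
  · simp only [smulL]
    rw [compat (Coalgebra.counit ∘ₗ LinearMap.mulLeft k (epsS k H w)) m]
    refine (keyRed k H M
      (Coalgebra.counit ∘ₗ LinearMap.mulLeft k (epsS k H w))
      (Coalgebra.counit ∘ₗ LinearMap.mulLeft k (epsS k H v))
      (Coalgebra.counit ∘ₗ LinearMap.mulLeft k (epsS k H v * epsS k H w))
      (fun h => ?_) (ρ m)).symm
    rw [claimL k H (epsS k H v) w h]
    simp [LinearMap.mulLeft_apply, mul_assoc]
  · simp only [smulR]
    rw [compat (Coalgebra.counit ∘ₗ LinearMap.mulRight k (epsS k H v)) m]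
    refine (keyRed k H M
      (Coalgebra.counit ∘ₗ LinearMap.mulRight k (epsS k H v))
      (Coalgebra.counit ∘ₗ LinearMap.mulRight k (epsS k H w))
      (Coalgebra.counit ∘ₗ LinearMap.mulRight k (epsS k H v * epsS k H w))
      (fun h => ?_) (ρ m)).symm
    rw [claimR k H v (epsS k H w) h]
    simp [LinearMap.mulRight_apply, mul_assoc]
  · simp only [smulL, smulR]
    rw [compat (Coalgebra.counit ∘ₗ LinearMap.mulLeft k (epsS k H v)) m,
      compat (Coalgebra.counit ∘ₗ LinearMap.mulRight k (epsS k H w)) m]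
    rw [keyRed k H M
      (Coalgebra.counit ∘ₗ LinearMap.mulLeft k (epsS k H v))
      (Coalgebra.counit ∘ₗ LinearMap.mulRight k (epsS k H w))
      (Coalgebra.counit ∘ₗ LinearMap.mulRight k (epsS k H w) ∘ₗ LinearMap.mulLeft k (epsS k H v))
      (fun h => ?_) (ρ m),
      keyRed k H M
      (Coalgebra.counit ∘ₗ LinearMap.mulRight k (epsS k H w))
      (Coalgebra.counit ∘ₗ LinearMap.mulLeft k (epsS k H v))
      (Coalgebra.counit ∘ₗ LinearMap.mulRight k (epsS k H w) ∘ₗ LinearMap.mulLeft k (epsS k H v))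
      (fun h => ?_) (ρ m)]
    · have h4 := WeakBialgebra.counit_mul_mul (k := k) (epsS k H v) h (epsS k H w)
      rw [← h4]
      simp [LinearMap.mulLeft_apply, LinearMap.mulRight_apply]
    · have h5 := WeakBialgebra.counit_mul_mul' (k := k) (epsS k H v) h (epsS k H w)
      rw [← h5]
      simp [LinearMap.mulLeft_apply, LinearMap.mulRight_apply]
end
end

section
/- Let H be a finite-dimensional weak bialgebra over a field k. Call a finite family of nonzero subspaces H_1, …, H_k of H a decomposition of H into weak bialgebras if H = H_1 ⊕ ⋯ ⊕ H_k as a vector space, H_i H_j = 0 for all i ≠ j, H_i H_i ⊆ H_i for all i, and Δ(H_i) ⊆ H_i ⊗ H_i for all i (each H_i is then itself a weak bialgebra, with unit the H_i-component of 1 and the restricted operations); H is indecomposable if its only such decomposition is the trivial one {H}. Then: (1) H admits a decomposition H = H_1 ⊕ ⋯ ⊕ H_k into weak bialgebras with each H_i indecomposable; (2) if H_1 ⊕ ⋯ ⊕ H_k = H = H′_1 ⊕ ⋯ ⊕ H′_l are two decompositions of H into indecomposable weak bialgebras, then k = l and there is a permutation σ of {1, …, k} with H′_i = H_{σ(i)}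 as subspaces of H for all i. -/
open TensorProduct

noncomputable section

variable (k H : Type*) [Field k] [Ring H] [Algebra k H] [Coalgebra k H]

/-- A finite family of nonzero subspaces `V i` of `H` is a decomposition of the weak
bialgebra `H` into weak bialgebras if `H = ⨁ᵢ V i` as a vector space, `V i · V j = 0`
for `i ≠ j`, each `V i` is closed under multiplication, and `Δ(V i) ⊆ V i ⊗ V i`. -/
def IsWeakBialgebraDecomposition {n : ℕ} (V : Fin n → Submodule k H) : Prop :=
  (∀ i, V i ≠ ⊥) ∧ DirectSum.IsInternal V ∧
  (∀ i j, i ≠ j → ∀ x ∈ V i, ∀ y ∈ V j, x * y = 0) ∧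
  (∀ i, ∀ x ∈ V i, ∀ y ∈ V i, x * y ∈ V i) ∧
  (∀ i, ∀ x ∈ V i, Coalgebra.comul (R := k) x ∈
    LinearMap.range (TensorProduct.map (V i).subtype (V i).subtype))

/-- A piece `A` is indecomposable (as a weak bialgebra) if it does not split as a direct
sum `A = B ⊕ C` of two nonzero subspaces with `B·C = C·B = 0`, each closed under
multiplication and comultiplication. -/
def PieceIndecomposable (A : Submodule k H) : Prop :=
  ¬ ∃ B C : Submodule k H, B ≠ ⊥ ∧ C ≠ ⊥ ∧ Disjoint B C ∧ B ⊔ C = A ∧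
    (∀ x ∈ B, ∀ y ∈ C, x * y = 0) ∧ (∀ x ∈ C, ∀ y ∈ B, x * y = 0) ∧
    (∀ x ∈ B, ∀ y ∈ B, x * y ∈ B) ∧ (∀ x ∈ C, ∀ y ∈ C, x * y ∈ C) ∧
    (∀ x ∈ B, Coalgebra.comul (R := k) x ∈
      LinearMap.range (TensorProduct.map B.subtype B.subtype)) ∧
    (∀ x ∈ C, Coalgebra.comul (R := k) x ∈
      LinearMap.range (TensorProduct.map C.subtype C.subtype))

/-!
Along a decomposition `H = ⨁ V i` with `V i * V j = 0` for `i ≠ j`, the components `e i ∈ V i`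
of `1` act as units on the blocks, so every block is a two-sided ideal.

Existence is induction on dimension: a decomposable piece splits into two smaller ones.
For uniqueness, let `W j` be an indecomposable block of a second decomposition. It is the sum
of the intersections `V i ⊓ W j`, which annihilate each other and have local units `e i * f j`.
They are closed under `Δ`, since multiplicativity of `Δ` gives
`Δ(x) = Δ(e i) Δ(x) ∈ (V i ⊗ V i)(W j ⊗ W j)`. So `W j` lies in a single `V i`, and by symmetry
the two families of blocks coincide.
-/

theorem TensorProduct.range_mapIncl_mul_range_mapIncl_le {R A : Type*} [CommSemiring R]
    [Semiring A] [Algebra R A] (P Q P' Q' : Submodule R A) :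
    LinearMap.range (mapIncl P Q) * LinearMap.range (mapIncl P' Q') ≤
      LinearMap.range (mapIncl (P * P') (Q * Q')) := by
  simp only [mapIncl, range_map_eq_span_tmul, Submodule.span_mul_span, Submodule.span_le]
  rintro _ ⟨_, ⟨p, q, rfl⟩, _, ⟨p', q', rfl⟩, rfl⟩
  refine Submodule.subset_span ⟨⟨_, Submodule.mul_mem_mul p.2 p'.2⟩,
    ⟨_, Submodule.mul_mem_mul q.2 q'.2⟩, ?_⟩
  simp [Algebra.TensorProduct.tmul_mul_tmul]

theorem Submodule.mul_eq_bot_iff_forall {R A : Type*} [CommSemiring R] [Semiring A]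
    [Algebra R A] {P Q : Submodule R A} : P * Q = ⊥ ↔ ∀ x ∈ P, ∀ y ∈ Q, x * y = 0 := by
  simp only [← le_bot_iff, Submodule.mul_le, Submodule.mem_bot]

theorem exists_equiv_of_forall_exists_le {ι κ α : Type*} [PartialOrder α] [OrderBot α]
    {V : ι → α} {W : κ → α} (hV : Pairwise (Function.onFun Disjoint V))
    (hW : Pairwise (Function.onFun Disjoint W))
    (hV0 : ∀ i, V i ≠ ⊥) (hW0 : ∀ j, W j ≠ ⊥) (hWV : ∀ j, ∃ i, W j ≤ V i)
    (hVW : ∀ i, ∃ j, V i ≤ W j) : ∃ σ : κ ≃ ι, ∀ j, W j = V (σ j) := by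
  choose σ hσ using hWV
  choose τ hτ using hVW
  have hτσ : ∀ j, τ (σ j) = j := fun j => by
    by_contra hne
    exact hW0 j ((hW (Ne.symm hne)).eq_bot_of_le ((hσ j).trans (hτ (σ j))))
  have hστ : ∀ i, σ (τ i) = i := fun i => by
    by_contra hne
    exact hV0 i ((hV (Ne.symm hne)).eq_bot_of_le ((hτ i).trans (hσ (τ i))))
  exact ⟨⟨σ, τ, hτσ, hστ⟩, fun j => (hσ j).antisymm (by simpa only [hτσ] using hτ (σ j))⟩

section Blocks

variable {k H}
variable {ι κ : Type*}

structure IsNonUnitalSubbialgebra (A : Submodule k H) : Prop where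
  mul_le : A * A ≤ A
  le_comap_comul : A ≤ (LinearMap.range (mapIncl A A)).comap (Coalgebra.comul (R := k))

theorem isNonUnitalSubbialgebra_top : IsNonUnitalSubbialgebra (⊤ : Submodule k H) where
  mul_le := le_top
  le_comap_comul := by
    rw [range_mapIncl, map₂_mk_top_top_eq_top, Submodule.comap_top]

theorem IsNonUnitalSubbialgebra.iSup {D : ι → Submodule k H}
    (hann : Pairwise fun i j => D i * D j = ⊥) (hD : ∀ i, IsNonUnitalSubbialgebra (D i)) :
    IsNonUnitalSubbialgebra (⨆ i, D i) where
  mul_le := by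
    simp only [Submodule.iSup_mul, Submodule.mul_iSup, iSup_le_iff]
    intro j i
    rcases eq_or_ne i j with rfl | hij
    · exact (hD i).mul_le.trans (le_iSup D i)
    · exact (hann hij).le.trans bot_le
  le_comap_comul := iSup_le fun i => (hD i).le_comap_comul.trans
    (Submodule.comap_mono (range_mapIncl_mono (le_iSup D i) (le_iSup D i)))

theorem IsNonUnitalSubbialgebra.inf [WeakBialgebra k H] {P Q : Submodule k H}
    (hP : IsNonUnitalSubbialgebra P) (hQ : IsNonUnitalSubbialgebra Q) (hPQ : P * Q ≤ P ⊓ Q)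
    {e : H} (he : e ∈ P) (heP : ∀ x ∈ P, e * x = x) : IsNonUnitalSubbialgebra (P ⊓ Q) where
  mul_le := le_inf ((mul_le_mul' inf_le_left inf_le_left).trans hP.mul_le)
    ((mul_le_mul' inf_le_right inf_le_right).trans hQ.mul_le)
  le_comap_comul x hx := by
    have hΔ : Coalgebra.comul (R := k) x =
        Coalgebra.comul (R := k) e * Coalgebra.comul (R := k) x := by
      rw [← WeakBialgebra.comul_mul, heP x hx.1]
    rw [Submodule.mem_comap, hΔ]
    exact range_mapIncl_mono hPQ hPQ (range_mapIncl_mul_range_mapIncl_le P P Q Q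
      (Submodule.mul_mem_mul (hP.le_comap_comul he) (hQ.le_comap_comul hx.2)))

/-- Independence of the blocks is not part of the definition: for `A = ⊤` it follows from the
local units, see `IsBlockDecomposition.iSupIndep`. -/
structure IsBlockDecomposition (A : Submodule k H) (V : ι → Submodule k H) : Prop where
  ne_bot : ∀ i, V i ≠ ⊥
  iSup_eq : ⨆ i, V i = A
  mul_eq_bot : Pairwise fun i j => V i * V j = ⊥
  isNonUnitalSubbialgebra : ∀ i, IsNonUnitalSubbialgebra (V i)

namespace IsBlockDecomposition

variable {A : Submodule k H} {V : ι → Submodule k H}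

theorem le (h : IsBlockDecomposition A V) (i : ι) : V i ≤ A :=
  h.iSup_eq ▸ le_iSup V i

theorem comp (h : IsBlockDecomposition A V) (e : κ ≃ ι) : IsBlockDecomposition A (V ∘ e) where
  ne_bot j := h.ne_bot (e j)
  iSup_eq := by rw [← h.iSup_eq]; exact e.iSup_comp
  mul_eq_bot := h.mul_eq_bot.comp_of_injective e.injective
  isNonUnitalSubbialgebra j := h.isNonUnitalSubbialgebra (e j)

theorem sum {B C : Submodule k H} {W : κ → Submodule k H} (hV : IsBlockDecomposition B V)
    (hW : IsBlockDecomposition C W) (hBC : B * C = ⊥) (hCB : C * B = ⊥) :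
    IsBlockDecomposition (B ⊔ C) (Sum.elim V W) where
  ne_bot := Sum.forall.2 ⟨hV.ne_bot, hW.ne_bot⟩
  iSup_eq := iSup_sum.trans (congrArg₂ (· ⊔ ·) hV.iSup_eq hW.iSup_eq)
  mul_eq_bot := by
    rintro (i | j) (i' | j') hne
    · exact hV.mul_eq_bot fun h => hne (congrArg Sum.inl h)
    · exact le_bot_iff.1 (hBC ▸ mul_le_mul' (hV.le i) (hW.le j'))
    · exact le_bot_iff.1 (hCB ▸ mul_le_mul' (hW.le j) (hV.le i'))
    · exact hW.mul_eq_bot fun h => hne (congrArg Sum.inr h)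
  isNonUnitalSubbialgebra := Sum.forall.2 ⟨hV.isNonUnitalSubbialgebra, hW.isNonUnitalSubbialgebra⟩

theorem mul_top_le (h : IsBlockDecomposition ⊤ V) (i : ι) : V i * ⊤ ≤ V i := by
  rw [← h.iSup_eq, Submodule.mul_iSup]
  refine iSup_le fun j => ?_
  rcases eq_or_ne i j with rfl | hij
  · exact (h.isNonUnitalSubbialgebra i).mul_le
  · exact (h.mul_eq_bot hij).le.trans bot_le

theorem top_mul_le (h : IsBlockDecomposition ⊤ V) (i : ι) : ⊤ * V i ≤ V i := by
  rw [← h.iSup_eq, Submodule.iSup_mul]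
  refine iSup_le fun j => ?_
  rcases eq_or_ne j i with rfl | hji
  · exact (h.isNonUnitalSubbialgebra j).mul_le
  · exact (h.mul_eq_bot hji).le.trans bot_le

theorem exists_units [Fintype ι] (h : IsBlockDecomposition ⊤ V) :
    ∃ e : ι → H, (∀ i, e i ∈ V i) ∧ ∑ i, e i = 1 ∧ ∀ i, ∀ x ∈ V i, e i * x = x := by
  obtain ⟨f, hf, hsum⟩ :=
    (Submodule.mem_iSup_iff_exists_finsupp V 1).1 (h.iSup_eq ▸ Submodule.mem_top)
  rw [Finsupp.sum_fintype _ _ fun _ => rfl] at hsum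
  refine ⟨f, hf, hsum, fun i x hx => ?_⟩
  calc f i * x = ∑ j, f j * x := (Finset.sum_eq_single i
        (fun j _ hji => Submodule.mul_eq_bot_iff_forall.1 (h.mul_eq_bot hji) _ (hf j) _ hx)
        (fun hi => (hi (Finset.mem_univ i)).elim)).symm
    _ = x := by rw [← Finset.sum_mul, hsum, one_mul]

theorem iSupIndep [Fintype ι] (h : IsBlockDecomposition ⊤ V) : iSupIndep V := by
  obtain ⟨e, he, -, heV⟩ := h.exists_units
  refine fun i => Submodule.disjoint_def.2 fun x hxi hx => ?_
  have hkill : V i * ⨆ (j) (_ : j ≠ i), V j = ⊥ := by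
    simp only [Submodule.mul_iSup]
    exact iSup₂_eq_bot.2 fun j hji => h.mul_eq_bot hji.symm
  rw [← heV i x hxi]
  exact Submodule.mul_eq_bot_iff_forall.1 hkill _ (he i) _ hx

end IsBlockDecomposition

/-- If another block were nonzero, `B i` and the sum of the other blocks would split `A`. -/
theorem PieceIndecomposable.eq_of_iSup_eq {A : Submodule k H}
    (hA : PieceIndecomposable k H A) {B : ι → Submodule k H} (hsup : ⨆ i, B i = A)
    (hann : Pairwise fun i j => B i * B j = ⊥) (hB : ∀ i, IsNonUnitalSubbialgebra (B i))
    (hunit : ∀ i, ∃ u ∈ B i, ∀ x ∈ B i, u * x = x) {i : ι} (hi : B i ≠ ⊥) : B i = A := by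
  set C := ⨆ j : {j // j ≠ i}, B j
  have hsplit : B i ⊔ C = A := by rw [← hsup, iSup_split_single B i, iSup_subtype']
  have hBC : B i * C = ⊥ := by
    rw [Submodule.mul_iSup]
    exact iSup_eq_bot.2 fun j => hann j.2.symm
  have hCB : C * B i = ⊥ := by
    rw [Submodule.iSup_mul]
    exact iSup_eq_bot.2 fun j => hann j.2
  have hC : IsNonUnitalSubbialgebra C :=
    .iSup (hann.comp_of_injective Subtype.val_injective) fun j => hB j
  obtain ⟨u, hu, huB⟩ := hunit i
  have hdisj : Disjoint (B i) C := Submodule.disjoint_def.2 fun x hxB hxC => by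
    rw [← huB x hxB]
    exact Submodule.mul_eq_bot_iff_forall.1 hBC _ hu _ hxC
  by_contra hne
  have hC0 : C ≠ ⊥ := fun hC0 => hne (by rw [← hsplit, hC0, sup_bot_eq])
  exact hA ⟨B i, C, hi, hC0, hdisj, hsplit,
    Submodule.mul_eq_bot_iff_forall.1 hBC, Submodule.mul_eq_bot_iff_forall.1 hCB,
    fun x hx y hy => (hB i).mul_le (Submodule.mul_mem_mul hx hy),
    fun x hx y hy => hC.mul_le (Submodule.mul_mem_mul hx hy),
    (hB i).le_comap_comul, hC.le_comap_comul⟩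

theorem IsBlockDecomposition.exists_le_of_pieceIndecomposable [WeakBialgebra k H] [Fintype ι]
    [Fintype κ] {V : ι → Submodule k H} {W : κ → Submodule k H}
    (hV : IsBlockDecomposition ⊤ V) (hW : IsBlockDecomposition ⊤ W) {j : κ}
    (hWj : PieceIndecomposable k H (W j)) : ∃ i, W j ≤ V i := by
  obtain ⟨e, he, hsum, heV⟩ := hV.exists_units
  obtain ⟨f, hf, -, hfW⟩ := hW.exists_units
  have hVW : ∀ i, V i * W j ≤ V i ⊓ W j := fun i =>
    le_inf ((mul_le_mul' le_rfl le_top).trans (hV.mul_top_le i))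
      ((mul_le_mul' le_top le_rfl).trans (hW.top_mul_le j))
  have hsup : ⨆ i, V i ⊓ W j = W j := by
    refine le_antisymm (iSup_le fun i => inf_le_right) fun x hx => ?_
    rw [← one_mul x, ← hsum, Finset.sum_mul]
    exact sum_mem fun i _ =>
      Submodule.mem_iSup_of_mem i (hVW i (Submodule.mul_mem_mul (he i) hx))
  have hann : Pairwise fun i i' => (V i ⊓ W j) * (V i' ⊓ W j) = ⊥ := fun i i' hii' =>
    le_bot_iff.1 (hV.mul_eq_bot hii' ▸ mul_le_mul' inf_le_left inf_le_left)
  have hsub : ∀ i, IsNonUnitalSubbialgebra (V i ⊓ W j) := fun i =>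
    (hV.isNonUnitalSubbialgebra i).inf (hW.isNonUnitalSubbialgebra j) (hVW i) (he i) (heV i)
  have hunit : ∀ i, ∃ u ∈ V i ⊓ W j, ∀ x ∈ V i ⊓ W j, u * x = x := fun i =>
    ⟨e i * f j, hVW i (Submodule.mul_mem_mul (he i) (hf j)), fun x hx => by
      rw [mul_assoc, hfW j x hx.2, heV i x hx.1]⟩
  obtain ⟨i, hi⟩ : ∃ i, V i ⊓ W j ≠ ⊥ := by
    by_contra! h
    exact hW.ne_bot j (by rw [← hsup, iSup_eq_bot]; exact h)
  exact ⟨i, hWj.eq_of_iSup_eq hsup hann hsub hunit hi ▸ inf_le_left⟩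

theorem IsBlockDecomposition.unique [WeakBialgebra k H] [Fintype ι] [Fintype κ]
    {V : ι → Submodule k H} {W : κ → Submodule k H}
    (hV : IsBlockDecomposition ⊤ V) (hVind : ∀ i, PieceIndecomposable k H (V i))
    (hW : IsBlockDecomposition ⊤ W) (hWind : ∀ j, PieceIndecomposable k H (W j)) :
    ∃ σ : κ ≃ ι, ∀ j, W j = V (σ j) :=
  exists_equiv_of_forall_exists_le hV.iSupIndep.pairwiseDisjoint hW.iSupIndep.pairwiseDisjoint
    hV.ne_bot hW.ne_bot (fun j => hV.exists_le_of_pieceIndecomposable hW (hWind j))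
    (fun i => hW.exists_le_of_pieceIndecomposable hV (hVind i))

theorem exists_isBlockDecomposition_pieceIndecomposable [FiniteDimensional k H]
    {A : Submodule k H} (hA : IsNonUnitalSubbialgebra A) :
    ∃ (ι : Type) (_ : Fintype ι) (V : ι → Submodule k H),
      IsBlockDecomposition A V ∧ ∀ i, PieceIndecomposable k H (V i) := by
  induction hd : Module.finrank k A using Nat.strong_induction_on generalizing A with
  | _ d ih => ?_
  by_cases hA0 : A = ⊥
  · exact ⟨Empty, inferInstance, Empty.elim,
      ⟨Empty.rec, hA0 ▸ iSup_of_empty _, fun i => i.elim, Empty.rec⟩, Empty.rec⟩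
  by_cases hind : PieceIndecomposable k H A
  · exact ⟨Unit, inferInstance, fun _ => A,
      ⟨fun _ => hA0, iSup_const, fun i j hij => (hij rfl).elim, fun _ => hA⟩, fun _ => hind⟩
  obtain ⟨B, C, hB0, hC0, hdisj, rfl, hBC, hCB, hBmul, hCmul, hBcomul, hCcomul⟩ := not_not.1 hind
  have hB : IsNonUnitalSubbialgebra B := ⟨Submodule.mul_le.2 hBmul, hBcomul⟩
  have hC : IsNonUnitalSubbialgebra C := ⟨Submodule.mul_le.2 hCmul, hCcomul⟩
  have hBlt : B < B ⊔ C := left_lt_sup.2 fun h => hC0 (hdisj.symm.eq_bot_of_le h)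
  have hClt : C < B ⊔ C := right_lt_sup.2 fun h => hB0 (hdisj.eq_bot_of_le h)
  obtain ⟨ι, _, V, hV, hVind⟩ := ih _ (hd ▸ Submodule.finrank_lt_finrank_of_lt hBlt) hB rfl
  obtain ⟨κ, _, W, hW, hWind⟩ := ih _ (hd ▸ Submodule.finrank_lt_finrank_of_lt hClt) hC rfl
  exact ⟨ι ⊕ κ, inferInstance, Sum.elim V W, hV.sum hW (Submodule.mul_eq_bot_iff_forall.2 hBC)
    (Submodule.mul_eq_bot_iff_forall.2 hCB), Sum.forall.2 ⟨hVind, hWind⟩⟩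

theorem isWeakBialgebraDecomposition_iff {n : ℕ} {V : Fin n → Submodule k H} :
    IsWeakBialgebraDecomposition k H V ↔ IsBlockDecomposition ⊤ V := by
  constructor
  · rintro ⟨hne, hint, hann, hmul, hcomul⟩
    exact ⟨hne, hint.submodule_iSup_eq_top,
      fun i j hij => Submodule.mul_eq_bot_iff_forall.2 (hann i j hij),
      fun i => ⟨Submodule.mul_le.2 (hmul i), hcomul i⟩⟩
  · intro h
    exact ⟨h.ne_bot,
      DirectSum.isInternal_submodule_of_iSupIndep_of_iSup_eq_top h.iSupIndep h.iSup_eq,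
      fun i j hij => Submodule.mul_eq_bot_iff_forall.1 (h.mul_eq_bot hij),
      fun i x hx y hy => (h.isNonUnitalSubbialgebra i).mul_le (Submodule.mul_mem_mul hx hy),
      fun i => (h.isNonUnitalSubbialgebra i).le_comap_comul⟩

end Blocks

/-- A finite-dimensional weak bialgebra decomposes into finitely many indecomposable
weak bialgebras, uniquely up to permutation. -/
theorem exists_unique_decomposition_into_indecomposables
    [WeakBialgebra k H] [FiniteDimensional k H] :
    (∃ (n : ℕ) (V : Fin n → Submodule k H),
      IsWeakBialgebraDecomposition k H V ∧ ∀ i, PieceIndecomposable k H (V i)) ∧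
    (∀ (n m : ℕ) (V : Fin n → Submodule k H) (W : Fin m → Submodule k H),
      IsWeakBialgebraDecomposition k H V → (∀ i, PieceIndecomposable k H (V i)) →
      IsWeakBialgebraDecomposition k H W → (∀ i, PieceIndecomposable k H (W i)) →
      n = m ∧ ∃ σ : Fin m ≃ Fin n, ∀ i, W i = V (σ i)) := by
  refine ⟨?_, fun n m V W hV hVind hW hWind => ?_⟩
  · obtain ⟨ι, _, V, hV, hVind⟩ := exists_isBlockDecomposition_pieceIndecomposable
      (isNonUnitalSubbialgebra_top (k := k) (H := H))
    let e := (Fintype.equivFin ι).symm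
    exact ⟨_, V ∘ e, isWeakBialgebraDecomposition_iff.2 (hV.comp e), fun i => hVind (e i)⟩
  · obtain ⟨σ, hσ⟩ := (isWeakBialgebraDecomposition_iff.1 hV).unique hVind
      (isWeakBialgebraDecomposition_iff.1 hW) hWind
    exact ⟨by simpa only [Fintype.card_fin] using (Fintype.card_congr σ).symm, σ, hσ⟩
end
end
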